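/- For any k ≠ 0 and complex numbers b̂, ĉ, the solution ĥ(ψ) = [ĉ sinh(kψ) − b̂ sinh(k(ψ−1))]/sinh(k) of ĥ'' − k²ĥ = 0 with ĥ(0) = b̂, ĥ(1) = ĉ satisfies ‖D^p ĥ‖²_{L²(0,1)} ≤ C k^{2p−1}(|b̂|² + |ĉ|²) for every p ≥ 0, with C independent of k. -/

import Mathlib

/- STATEMENT 14: For k ≠ 0 and b̂, ĉ ∈ ℂ, the function
ĥ(ψ) = [ĉ sinh(kψ) − b̂ sinh(k(ψ−1))]/sinh(k) solves ĥ'' − k²ĥ = 0, ĥ(0) = b̂,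
ĥ(1) = ĉ, and satisfies ‖D^p ĥ‖²_{L²(0,1)} ≤ C k^{2p−1}(|b̂|² + |ĉ|²) for every
p ≥ 0, with C = C(p) independent of k. -/

/-- the homogeneous solution ĥ -/
noncomputable def hsol (k : ℤ) (b c : ℂ) (ψ : ℝ) : ℂ :=
  (c * Complex.sinh ((k:ℂ) * ψ) - b * Complex.sinh ((k:ℂ) * ((ψ:ℂ) - 1))) /
    Complex.sinh (k:ℂ)

/-!
Differentiating `p` times gives `D^p ĥ(ψ) = k^p (ĉ S_p(kψ) − b̂ S_p(k(ψ−1))) / sinh k`, where `S_p`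
is `sinh` or `cosh` according to the parity of `p`. Since `|S_p(x)| ≤ e^{|x|}` and
`e^{|k|} ≤ 4 |sinh k|` once `|k| ≥ 1`, this gives
`|D^p ĥ(ψ)| ≤ 4 |k|^p (|ĉ| e^{|k|(ψ−1)} + |b̂| e^{−|k|ψ})`: ĥ lives in boundary layers of width
`1/|k|`, and integrating the squared exponentials over `[0, 1]` contributes the factor `1/(2|k|)`.
-/

namespace Real

theorem cosh_le_exp_abs (x : ℝ) : cosh x ≤ exp |x| := by
  rw [← cosh_abs, cosh_eq]
  linarith [exp_le_exp.2 (show -|x| ≤ |x| by linarith [abs_nonneg x])]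

theorem exp_le_four_mul_sinh {x : ℝ} (hx : 1 ≤ x) : exp x ≤ 4 * sinh x := by
  have h2 : 2 ≤ exp x := by linarith [add_one_le_exp x]
  have h1 : exp (-x) ≤ 1 := exp_le_one_iff.2 (by linarith)
  rw [sinh_eq]
  linarith

theorem integral_exp_neg_mul_le {a : ℝ} (ha : 0 < a) :
    ∫ t in (0 : ℝ)..1, exp (-(a * t)) ≤ 1 / a := by
  have h : ∫ t in (0 : ℝ)..1, exp (-a * t) = (1 - exp (-a)) / a := by
    rw [intervalIntegral.integral_comp_mul_left exp (neg_ne_zero.2 ha.ne'), integral_exp]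
    simp only [mul_zero, mul_one, exp_zero, smul_eq_mul]
    field_simp
    ring
  simp_rw [← neg_mul]
  rw [h]
  gcongr
  linarith [exp_pos (-a)]

theorem integral_exp_mul_sub_one_le {a : ℝ} (ha : 0 < a) :
    ∫ t in (0 : ℝ)..1, exp (a * (t - 1)) ≤ 1 / a := by
  have h := intervalIntegral.integral_comp_sub_left (fun t => exp (-(a * t))) (1 : ℝ)
    (a := 0) (b := 1)
  simp only [sub_zero, sub_self] at h
  calc _ = ∫ t in (0 : ℝ)..1, exp (-(a * (1 - t))) := by congr 1; ext t; ring_nf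
    _ ≤ 1 / a := h ▸ integral_exp_neg_mul_le ha

end Real

theorem Complex.sinh_intCast_ne_zero {k : ℤ} (hk : k ≠ 0) : Complex.sinh k ≠ 0 := by
  rw [← Complex.ofReal_intCast, ← Complex.ofReal_sinh, Complex.ofReal_ne_zero, Ne,
    Real.sinh_eq_zero]
  exact_mod_cast hk

noncomputable def sinhOrCosh (n : ℕ) : ℂ → ℂ :=
  if Even n then Complex.sinh else Complex.cosh

@[fun_prop]
theorem continuous_sinhOrCosh (n : ℕ) : Continuous (sinhOrCosh n) := by
  unfold sinhOrCosh
  split_ifs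
  exacts [Complex.continuous_sinh, Complex.continuous_cosh]

theorem hasDerivAt_sinhOrCosh (n : ℕ) (z : ℂ) :
    HasDerivAt (sinhOrCosh n) (sinhOrCosh (n + 1) z) z := by
  rcases Nat.even_or_odd n with hn | hn
  · have hn' : ¬Even (n + 1) := Nat.not_even_iff_odd.2 hn.add_one
    simpa [sinhOrCosh, hn, hn'] using Complex.hasDerivAt_sinh z
  · have hn' : ¬Even n := Nat.not_even_iff_odd.2 hn
    simpa [sinhOrCosh, hn', hn.add_one] using Complex.hasDerivAt_cosh z

theorem norm_sinhOrCosh_ofReal_le (n : ℕ) (x : ℝ) : ‖sinhOrCosh n x‖ ≤ Real.exp |x| := by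
  refine le_trans ?_ (Real.cosh_le_exp_abs x)
  unfold sinhOrCosh
  split_ifs
  · rw [← Complex.ofReal_sinh, Complex.norm_real, Real.norm_eq_abs, Real.abs_sinh, ← Real.cosh_abs]
    exact (Real.sinh_lt_cosh _).le
  · rw [← Complex.ofReal_cosh, Complex.norm_real, Real.norm_eq_abs, abs_of_pos (Real.cosh_pos x)]

theorem hasDerivAt_sinhOrCosh_mul_sub (n : ℕ) (κ a : ℂ) (t : ℝ) :
    HasDerivAt (fun s : ℝ => sinhOrCosh n (κ * (s - a)))
      (κ * sinhOrCosh (n + 1) (κ * (t - a))) t := by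
  have h : HasDerivAt (fun z : ℂ => κ * (z - a)) κ t := by
    simpa using ((hasDerivAt_id (t : ℂ)).sub_const a).const_mul κ
  simpa [mul_comm] using ((hasDerivAt_sinhOrCosh n _).comp (t : ℂ) h).comp_ofReal

theorem iteratedDeriv_hsol (k : ℤ) (b c : ℂ) (p : ℕ) :
    iteratedDeriv p (hsol k b c) = fun ψ : ℝ =>
      (k : ℂ) ^ p * (c * sinhOrCosh p (k * ψ) - b * sinhOrCosh p (k * (ψ - 1))) /
        Complex.sinh k := by
  induction p with
  | zero => funext ψ; simp [hsol, sinhOrCosh]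
  | succ n ih =>
    rw [iteratedDeriv_succ, ih]
    funext ψ
    have h0 : HasDerivAt (fun s : ℝ => sinhOrCosh n (k * s))
        (k * sinhOrCosh (n + 1) (k * ψ)) ψ := by
      simpa using hasDerivAt_sinhOrCosh_mul_sub n k 0 ψ
    have h1 := hasDerivAt_sinhOrCosh_mul_sub n k 1 ψ
    refine ((((h0.const_mul c).sub (h1.const_mul b)).const_mul ((k : ℂ) ^ n)).div_const
      (Complex.sinh k)).deriv.trans ?_
    ring

theorem continuous_iteratedDeriv_hsol (k : ℤ) (b c : ℂ) (p : ℕ) :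
    Continuous (iteratedDeriv p (hsol k b c)) := by
  rw [iteratedDeriv_hsol]
  fun_prop

theorem hsol_zero {k : ℤ} (hk : k ≠ 0) (b c : ℂ) : hsol k b c 0 = b := by
  have := Complex.sinh_intCast_ne_zero hk
  simp only [hsol, Complex.ofReal_zero, mul_zero, Complex.sinh_zero, zero_sub, mul_neg, mul_one,
    Complex.sinh_neg]
  field_simp

theorem hsol_one {k : ℤ} (hk : k ≠ 0) (b c : ℂ) : hsol k b c 1 = c := by
  have := Complex.sinh_intCast_ne_zero hk
  simp only [hsol, Complex.ofReal_one, mul_one, sub_self, mul_zero, Complex.sinh_zero]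
  field_simp
  ring

theorem deriv_deriv_hsol (k : ℤ) (b c : ℂ) (ψ : ℝ) :
    deriv (deriv (hsol k b c)) ψ = (k : ℂ) ^ 2 * hsol k b c ψ := by
  rw [show deriv (deriv (hsol k b c)) = iteratedDeriv 2 (hsol k b c) by
    rw [iteratedDeriv_succ, iteratedDeriv_one], iteratedDeriv_hsol]
  simp only [sinhOrCosh, even_two, if_true, hsol]
  ring

theorem norm_iteratedDeriv_hsol_le {k : ℤ} (hk : k ≠ 0) (b c : ℂ) (p : ℕ) {t : ℝ}
    (ht : t ∈ Set.Icc (0 : ℝ) 1) :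
    ‖iteratedDeriv p (hsol k b c) t‖ ≤ 4 * |(k : ℝ)| ^ p *
      (‖c‖ * Real.exp (|(k : ℝ)| * (t - 1)) + ‖b‖ * Real.exp (-(|(k : ℝ)| * t))) := by
  have hK : (1 : ℝ) ≤ |(k : ℝ)| := by
    rw [← Int.cast_abs]
    exact_mod_cast Int.one_le_abs hk
  set K := |(k : ℝ)|
  have hsinh : ‖Complex.sinh k‖ = Real.sinh K := by
    rw [← Complex.ofReal_intCast, ← Complex.ofReal_sinh, Complex.norm_real, Real.norm_eq_abs,
      Real.abs_sinh]
  have hS : Real.exp K ≤ 4 * Real.sinh K := Real.exp_le_four_mul_sinh hK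
  have hS0 : 0 < Real.sinh K := Real.sinh_pos_iff.2 (by linarith)
  have h0 : ‖sinhOrCosh p (k * t)‖ ≤ Real.exp (K * t) := by
    have := norm_sinhOrCosh_ofReal_le p (k * t)
    rwa [abs_mul, abs_of_nonneg ht.1, Complex.ofReal_mul, Complex.ofReal_intCast] at this
  have h1 : ‖sinhOrCosh p (k * (t - 1))‖ ≤ Real.exp (K * (1 - t)) := by
    have := norm_sinhOrCosh_ofReal_le p (k * (t - 1))
    rwa [abs_mul, abs_of_nonpos (show t - 1 ≤ 0 by linarith [ht.2]), neg_sub, Complex.ofReal_mul,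
      Complex.ofReal_intCast, Complex.ofReal_sub, Complex.ofReal_one] at this
  rw [iteratedDeriv_hsol, norm_div, norm_mul, norm_pow, Complex.norm_intCast, hsinh,
    div_le_iff₀ hS0]
  calc K ^ p * ‖c * sinhOrCosh p (k * t) - b * sinhOrCosh p (k * (t - 1))‖
      ≤ K ^ p * (‖c‖ * Real.exp (K * t) + ‖b‖ * Real.exp (K * (1 - t))) := by
        gcongr
        refine (norm_sub_le _ _).trans ?_
        rw [norm_mul, norm_mul]
        gcongr
    _ = K ^ p * (‖c‖ * Real.exp (K * (t - 1)) + ‖b‖ * Real.exp (-(K * t))) * Real.exp K := by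
        simp only [add_mul, mul_assoc, ← Real.exp_add]
        ring_nf
    _ ≤ K ^ p * (‖c‖ * Real.exp (K * (t - 1)) + ‖b‖ * Real.exp (-(K * t))) *
          (4 * Real.sinh K) := by
        gcongr
    _ = _ := by ring

theorem sq_norm_iteratedDeriv_hsol_le {k : ℤ} (hk : k ≠ 0) (b c : ℂ) (p : ℕ) {t : ℝ}
    (ht : t ∈ Set.Icc (0 : ℝ) 1) :
    ‖iteratedDeriv p (hsol k b c) t‖ ^ 2 ≤ 32 * |(k : ℝ)| ^ (2 * p) *
      (‖c‖ ^ 2 * Real.exp (2 * |(k : ℝ)| * (t - 1)) +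
        ‖b‖ ^ 2 * Real.exp (-(2 * |(k : ℝ)| * t))) := by
  set K := |(k : ℝ)|
  calc ‖iteratedDeriv p (hsol k b c) t‖ ^ 2
      ≤ (4 * K ^ p * (‖c‖ * Real.exp (K * (t - 1)) + ‖b‖ * Real.exp (-(K * t)))) ^ 2 := by
        gcongr
        exact norm_iteratedDeriv_hsol_le hk b c p ht
    _ ≤ 16 * K ^ (2 * p) *
        (2 * ((‖c‖ * Real.exp (K * (t - 1))) ^ 2 + (‖b‖ * Real.exp (-(K * t))) ^ 2)) := by
        rw [mul_pow, mul_pow, ← pow_mul, mul_comm p]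
        gcongr
        · norm_num
        · exact add_sq_le
    _ = _ := by
        simp only [mul_pow, ← Real.exp_nat_mul, K]
        ring_nf

theorem integral_norm_iteratedDeriv_hsol_sq_le {k : ℤ} (hk : k ≠ 0) (b c : ℂ) (p : ℕ) :
    ∫ t in (0 : ℝ)..1, ‖iteratedDeriv p (hsol k b c) t‖ ^ 2 ≤
      16 * |(k : ℝ)| ^ (2 * (p : ℤ) - 1) * (‖b‖ ^ 2 + ‖c‖ ^ 2) := by
  have hK : (0 : ℝ) < |(k : ℝ)| := by positivity
  set K := |(k : ℝ)|
  have hK2 : 0 < 2 * K := by positivity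
  have hint : IntervalIntegrable (fun t => ‖iteratedDeriv p (hsol k b c) t‖ ^ 2)
      MeasureTheory.volume 0 1 :=
    ((continuous_iteratedDeriv_hsol k b c p).norm.pow 2).intervalIntegrable _ _
  calc ∫ t in (0 : ℝ)..1, ‖iteratedDeriv p (hsol k b c) t‖ ^ 2
      ≤ ∫ t in (0 : ℝ)..1, 32 * K ^ (2 * p) * (‖c‖ ^ 2 * Real.exp (2 * K * (t - 1)) +
          ‖b‖ ^ 2 * Real.exp (-(2 * K * t))) :=
        intervalIntegral.integral_mono_on zero_le_one hint
          ((by fun_prop : Continuous _).intervalIntegrable _ _)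
          fun t ht => sq_norm_iteratedDeriv_hsol_le hk b c p ht
    _ = 32 * K ^ (2 * p) * (‖c‖ ^ 2 * (∫ t in (0 : ℝ)..1, Real.exp (2 * K * (t - 1))) +
          ‖b‖ ^ 2 * ∫ t in (0 : ℝ)..1, Real.exp (-(2 * K * t))) := by
        rw [intervalIntegral.integral_const_mul, intervalIntegral.integral_add
          ((by fun_prop : Continuous _).intervalIntegrable _ _)
          ((by fun_prop : Continuous _).intervalIntegrable _ _),
          intervalIntegral.integral_const_mul, intervalIntegral.integral_const_mul]
    _ ≤ 32 * K ^ (2 * p) * (‖c‖ ^ 2 * (1 / (2 * K)) + ‖b‖ ^ 2 * (1 / (2 * K))) := by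
        gcongr
        exacts [Real.integral_exp_mul_sub_one_le hK2, Real.integral_exp_neg_mul_le hK2]
    _ = _ := by
        rw [zpow_sub₀ hK.ne', zpow_one, zpow_mul, zpow_natCast, zpow_ofNat, ← pow_mul]
        field_simp
        ring

theorem homogeneous_solution_estimates (p : ℕ) :
    ∃ C > (0:ℝ), ∀ k : ℤ, k ≠ 0 → ∀ b c : ℂ,
      -- ĥ solves the boundary value problem
      hsol k b c 0 = b ∧ hsol k b c 1 = c ∧
      (∀ ψ : ℝ, deriv (deriv (hsol k b c)) ψ = (k:ℂ)^2 * hsol k b c ψ) ∧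
      -- and satisfies the L² estimates on its derivatives
      (∫ t in (0:ℝ)..1, ‖iteratedDeriv p (hsol k b c) t‖^2) ≤
        C * ((|k| : ℤ) : ℝ) ^ (2*(p:ℤ) - 1) * (‖b‖^2 + ‖c‖^2) := by
  refine ⟨16, by norm_num, fun k hk b c =>
    ⟨hsol_zero hk b c, hsol_one hk b c, deriv_deriv_hsol k b c, ?_⟩⟩
  rw [Int.cast_abs]
  exact integral_norm_iteratedDeriv_hsol_sq_le hk b c p
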